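/- arXiv:1803.03929 — 2 statements merged into one kernel-verified Lean document; each statement's English description precedes it below -/
import Mathlib

section
/- (Theorem 2.4, Geometric Characterization of ρ-Equivalence Classes) For g ∈ F^m let [g]_ρ = {h ∈ F^m : I_h = I_g} and let X_g = ⋂{H_I : I ∈ C(M), c_I·g = 0} (with X_g = F^m if no circuit I satisfies c_I·g = 0). Then [g]_ρ = M(A^ρ/X_g) = X_g ∖ ⋃{H_I : I ∈ C(M), c_I·g ≠ 0}; equivalently, for h ∈ F^m one has I_h = I_g if and only if for every circuit I ∈ C(M), c_I·h = 0 ⟺ c_I·g = 0. -/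
open Matrix

variable {F : Type*} [Field F] {m n : ℕ}

/-- The subsystem `[A|J] x = [g|J]` is consistent. -/
def Consistent (A : Matrix (Fin m) (Fin n) F) (J : Finset (Fin m)) (g : Fin m → F) : Prop :=
  ∃ x : Fin n → F, ∀ j ∈ J, A j ⬝ᵥ x = g j

/-- `I` is a circuit of the matroid represented by the rows of `A`: the rows indexed by `I`
are linearly dependent, but the rows indexed by any proper subset are linearly independent. -/
def IsCircuit (A : Matrix (Fin m) (Fin n) F) (I : Finset (Fin m)) : Prop :=
  ¬ LinearIndependent F (fun i : ↥I => A (i : Fin m)) ∧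
    ∀ J : Finset (Fin m), J ⊂ I → LinearIndependent F (fun j : ↥J => A (j : Fin m))

/-- `c` is a circuit vector of the circuit `I`: `c · A = 0`, the entries of `c` indexed by `I`
are nonzero, and all other entries vanish. -/
def IsCircuitVector (A : Matrix (Fin m) (Fin n) F) (I : Finset (Fin m)) (c : Fin m → F) : Prop :=
  Matrix.vecMul c A = 0 ∧ (∀ i ∈ I, c i ≠ 0) ∧ (∀ i ∉ I, c i = 0)
/-- `I_g`: the collection of index sets `J` for which `[A|J] x = [g|J]` is consistent. -/
def Iset (A : Matrix (Fin m) (Fin n) F) (g : Fin m → F) : Set (Finset (Fin m)) :=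
  {J | Consistent A J g}

/-- `C_g = I_g ∩ C(M)`: the circuits whose subsystem is consistent. -/
def Cset (A : Matrix (Fin m) (Fin n) F) (g : Fin m → F) : Set (Finset (Fin m)) :=
  Iset A g ∩ {I | IsCircuit A I}
/-- The hyperplane `H_I ⊆ F^m` associated with a circuit `I`: the zero set of any circuit
vector of `I` (this set does not depend on the choice of circuit vector, since circuit
vectors are unique up to a nonzero scalar). -/
def Hcirc (A : Matrix (Fin m) (Fin n) F) (I : Finset (Fin m)) : Set (Fin m → F) :=
  {y | ∀ c : Fin m → F, IsCircuitVector A I c → c ⬝ᵥ y = 0}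

/-- `X_g`: the intersection of all hyperplanes `H_I` (over circuits `I`) containing `g`;
it equals `F^m` when there is no such circuit. -/
def Xflat (A : Matrix (Fin m) (Fin n) F) (g : Fin m → F) : Set (Fin m → F) :=
  ⋂ I ∈ {I : Finset (Fin m) | IsCircuit A I ∧ g ∈ Hcirc A I}, Hcirc A I


/-- Solve a linear system with linearly independent rows. -/
lemma exists_dotProduct_eq {ι : Type*} [Fintype ι] [DecidableEq ι]
    (v : ι → Fin n → F) (hv : LinearIndependent F v) (b : ι → F) :
    ∃ x : Fin n → F, ∀ i, v i ⬝ᵥ x = b i := by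
  classical
  let B : Matrix ι (Fin n) F := Matrix.of v
  have hinj : Function.Injective B.vecMulLinear := by
    rw [Matrix.coe_vecMulLinear, Matrix.vecMul_injective_iff]
    exact hv
  have hsurj : Function.Surjective B.vecMulLinear.dualMap :=
    LinearMap.dualMap_surjective_of_injective hinj
  obtain ⟨φ, hφ⟩ := hsurj (∑ i, b i • LinearMap.proj i)
  refine ⟨fun k => φ (Pi.single k 1), fun i => ?_⟩
  have h1 : φ (B.vecMulLinear (Pi.single i 1)) = b i := by
    have := congrFun (congrArg (fun f : ((ι → F) →ₗ[F] F) => (f : (ι → F) → F)) hφ)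
      (Pi.single i (1 : F))
    simp only [LinearMap.dualMap_apply'] at this
    simpa [Pi.single_apply] using this
  have h2 : B.vecMulLinear (Pi.single i 1) = v i := by
    rw [Matrix.vecMulLinear_apply]
    ext j
    simp [Matrix.vecMul, dotProduct, Pi.single_apply, B]
  have h3 : v i ⬝ᵥ (fun k => φ (Pi.single k 1)) = φ (v i) := by
    have hv' : (∑ k, v i k • (Pi.single k 1 : Fin n → F)) = v i := by
      ext j
      simp [Pi.single_apply]
    conv_rhs => rw [← hv']
    rw [map_sum]
    simp [dotProduct]
  rw [h3, ← h2, h1]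

/-- Dot product of a vector supported in `S`. -/
lemma dot_supported (S : Finset (Fin m)) (c y : Fin m → F) (hsupp : ∀ i ∉ S, c i = 0) :
    c ⬝ᵥ y = ∑ i ∈ S, c i * y i := by
  rw [dotProduct]
  refine (Finset.sum_subset (Finset.subset_univ S) ?_).symm
  intro i _ hiS
  simp [hsupp i hiS]

lemma indep_subset {A : Matrix (Fin m) (Fin n) F} {S T : Finset (Fin m)}
    (h : LinearIndependent F (fun i : ↥T => A (i : Fin m))) (hST : S ⊆ T) :
    LinearIndependent F (fun i : ↥S => A (i : Fin m)) :=
  h.comp (fun i : ↥S => (⟨(i : Fin m), hST i.2⟩ : ↥T))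
    (fun a b hab => Subtype.ext (congrArg Subtype.val hab :))

lemma not_li_of_relation {A : Matrix (Fin m) (Fin n) F} (S : Finset (Fin m)) (c : Fin m → F)
    (hsum : ∑ i ∈ S, c i • A i = 0) (i0 : Fin m) (hi0S : i0 ∈ S) (hi0 : c i0 ≠ 0) :
    ¬ LinearIndependent F (fun i : ↥S => A (i : Fin m)) := by
  rw [Fintype.not_linearIndependent_iff]
  refine ⟨fun i : ↥S => c i, ?_, ⟨⟨i0, hi0S⟩, hi0⟩⟩
  rw [Finset.sum_coe_sort S (fun i => c i • A i)]
  exact hsum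

lemma exists_circuit_subset (A : Matrix (Fin m) (Fin n) F) (S : Finset (Fin m))
    (hS : ¬ LinearIndependent F (fun i : ↥S => A (i : Fin m))) :
    ∃ I ⊆ S, IsCircuit A I := by
  classical
  induction S using Finset.strongInduction with
  | _ S ih =>
    by_cases h : ∀ J : Finset (Fin m), J ⊂ S → LinearIndependent F (fun j : ↥J => A (j : Fin m))
    · exact ⟨S, Finset.Subset.refl S, hS, h⟩
    · push_neg at h
      obtain ⟨J, hJS, hJ⟩ := h
      obtain ⟨I, hIJ, hI⟩ := ih J hJS hJ
      exact ⟨I, hIJ.trans hJS.subset, hI⟩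

lemma exists_circuitVector {A : Matrix (Fin m) (Fin n) F} {I : Finset (Fin m)}
    (hI : IsCircuit A I) : ∃ c, IsCircuitVector A I c := by
  classical
  obtain ⟨hdep, hmin⟩ := hI
  rw [Fintype.not_linearIndependent_iff] at hdep
  obtain ⟨d, hsum, i0, hi0⟩ := hdep
  set c : Fin m → F := fun i => if h : i ∈ I then d ⟨i, h⟩ else 0 with hc
  have hsupp : ∀ i ∉ I, c i = 0 := fun i h => dif_neg h
  have hcI : ∀ i : ↥I, c (i : Fin m) = d i := fun i => dif_pos i.2
  have hsumI : ∑ i ∈ I, c i • A i = 0 := by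
    rw [← Finset.sum_coe_sort I (fun i => c i • A i)]
    rw [← hsum]
    exact Finset.sum_congr rfl (fun i _ => by rw [hcI i])
  have hnz : ∀ i ∈ I, c i ≠ 0 := by
    intro i1 hi1 hci1
    have hne : (i0 : Fin m) ≠ i1 := by
      intro h
      apply hi0
      rw [← hcI i0, h, hci1]
    have hsum' : ∑ i ∈ I.erase i1, c i • A i = 0 := by
      rw [Finset.sum_erase _ (by rw [hci1]; simp)]
      exact hsumI
    exact not_li_of_relation (I.erase i1) c hsum' i0 (Finset.mem_erase.mpr ⟨hne, i0.2⟩)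
      (by rw [hcI i0]; exact hi0)
      (hmin (I.erase i1) (Finset.erase_ssubset hi1))
  refine ⟨c, ?_, hnz, hsupp⟩
  ext k
  have h1 : (c ᵥ* A) k = ∑ i, c i * A i k := by
    simp [Matrix.vecMul, dotProduct]
  rw [h1]
  have h2 : ∑ i, c i * A i k = ∑ i ∈ I, c i * A i k := by
    refine (Finset.sum_subset (Finset.subset_univ I) ?_).symm
    intro i _ hiI
    simp [hsupp i hiI]
  rw [h2]
  have := congrFun hsumI k
  simpa using this

/-- A consistent subsystem annihilates all circuit vectors of circuits inside it. -/
lemma mem_Hcirc_of_consistent {A : Matrix (Fin m) (Fin n) F} {J I : Finset (Fin m)}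
    {g : Fin m → F} (hcons : Consistent A J g) (hI : IsCircuit A I) (hIJ : I ⊆ J) :
    g ∈ Hcirc A I := by
  obtain ⟨x, hx⟩ := hcons
  intro c hc
  obtain ⟨hrel, hnz, hsupp⟩ := hc
  rw [dot_supported I c g hsupp]
  have h1 : ∑ i ∈ I, c i * g i = ∑ i ∈ I, c i * (A i ⬝ᵥ x) := by
    refine Finset.sum_congr rfl (fun i hi => ?_)
    rw [hx i (hIJ hi)]
  rw [h1, ← dot_supported I c (fun i => A i ⬝ᵥ x) hsupp]
  have h2 : c ⬝ᵥ (fun i => A i ⬝ᵥ x) = c ⬝ᵥ (A *ᵥ x) := rfl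
  rw [h2, Matrix.dotProduct_mulVec, hrel, zero_dotProduct]

/-- Rouché–Capelli via circuits: the subsystem on `J` is consistent iff `g` lies on the
hyperplane of every circuit contained in `J`. -/
lemma consistent_iff (A : Matrix (Fin m) (Fin n) F) (J : Finset (Fin m)) (g : Fin m → F) :
    Consistent A J g ↔
      ∀ I : Finset (Fin m), IsCircuit A I → I ⊆ J → g ∈ Hcirc A I := by
  classical
  constructor
  · intro hcons I hI hIJ
    exact mem_Hcirc_of_consistent hcons hI hIJ
  · intro h
    let T := J.powerset.filter (fun S : Finset (Fin m) => LinearIndependent F (fun i : ↥S => A (i : Fin m)))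
    have hT : (∅ : Finset (Fin m)) ∈ T := by
      refine Finset.mem_filter.mpr ⟨Finset.empty_mem_powerset J, ?_⟩
      haveI : IsEmpty ↥(∅ : Finset (Fin m)) := Finset.isEmpty_coe_sort.mpr rfl
      exact linearIndependent_empty_type
    obtain ⟨B, hBT, hBmax⟩ := Finset.exists_max_image T Finset.card ⟨∅, hT⟩
    have hBJ : B ⊆ J := Finset.mem_powerset.mp (Finset.mem_filter.mp hBT).1
    have hBli := (Finset.mem_filter.mp hBT).2
    obtain ⟨x, hx⟩ := exists_dotProduct_eq (fun i : ↥B => A (i : Fin m)) hBli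
      (fun i => g (i : Fin m))
    refine ⟨x, fun j hjJ => ?_⟩
    by_cases hjB : j ∈ B
    · exact hx ⟨j, hjB⟩
    · have hins : insert j B ⊆ J := Finset.insert_subset hjJ hBJ
      have hdep : ¬ LinearIndependent F (fun i : ↥(insert j B) => A (i : Fin m)) := by
        intro hli
        have hmem : insert j B ∈ T :=
          Finset.mem_filter.mpr ⟨Finset.mem_powerset.mpr hins, hli⟩
        have := hBmax _ hmem
        rw [Finset.card_insert_of_notMem hjB] at this
        omega
      obtain ⟨I, hIins, hIc⟩ := exists_circuit_subset A _ hdep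
      have hjI : j ∈ I := by
        by_contra hjI
        have hIB : I ⊆ B := fun i hi =>
          (Finset.mem_insert.mp (hIins hi)).resolve_left (fun hh => hjI (hh ▸ hi))
        exact hIc.1 (indep_subset hBli hIB)
      obtain ⟨c, hc⟩ := exists_circuitVector hIc
      have hg0 : c ⬝ᵥ g = 0 := h I hIc (hIins.trans hins) c hc
      obtain ⟨hrel, hnz, hsupp⟩ := hc
      have hx0 : c ⬝ᵥ (A *ᵥ x) = 0 := by
        rw [Matrix.dotProduct_mulVec, hrel, zero_dotProduct]
      have e1' : ∑ i ∈ I, c i * (A *ᵥ x) i = 0 := by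
        rw [← dot_supported I c (A *ᵥ x) hsupp]
        exact hx0
      have e1 : ∑ i ∈ I, c i * (A i ⬝ᵥ x) = 0 := e1'
      have e2 : ∑ i ∈ I, c i * g i = 0 := by
        rw [← dot_supported I c g hsupp]
        exact hg0
      rw [← Finset.add_sum_erase _ _ hjI] at e1 e2
      have hsame : ∑ i ∈ I.erase j, c i * (A i ⬝ᵥ x) = ∑ i ∈ I.erase j, c i * g i := by
        refine Finset.sum_congr rfl (fun i hi => ?_)
        have hiB : i ∈ B := by
          obtain ⟨hne, hiI⟩ := Finset.mem_erase.mp hi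
          exact (Finset.mem_insert.mp (hIins hiI)).resolve_left hne
        rw [hx ⟨i, hiB⟩]
      have hjc : c j * (A j ⬝ᵥ x) = c j * g j := by
        have := e1.trans e2.symm
        rw [hsame] at this
        exact add_right_cancel this
      exact mul_left_cancel₀ (hnz j hjI) hjc

/-- The key equivalence: `I_h = I_g` iff `h` and `g` lie on the same circuit hyperplanes. -/
lemma iset_eq_iff (A : Matrix (Fin m) (Fin n) F) (g h : Fin m → F) :
    Iset A h = Iset A g ↔
      ∀ I : Finset (Fin m), IsCircuit A I → (h ∈ Hcirc A I ↔ g ∈ Hcirc A I) := by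
  have hcons : ∀ (y : Fin m → F) (I : Finset (Fin m)), IsCircuit A I →
      (Consistent A I y ↔ y ∈ Hcirc A I) := by
    intro y I hI
    constructor
    · intro hc
      exact mem_Hcirc_of_consistent hc hI (Finset.Subset.refl I)
    · intro hy
      rw [consistent_iff]
      intro I' hI' hI'I
      have hII' : I' = I := by
        by_contra hne
        exact hI'.1 (hI.2 I' (Finset.ssubset_iff_subset_ne.mpr ⟨hI'I, hne⟩))
      rw [hII']
      exact hy
  constructor
  · intro heq I hI
    have h1 : Consistent A I h ↔ Consistent A I g := by
      have : (I ∈ Iset A h) ↔ (I ∈ Iset A g) := by rw [heq]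
      exact this
    rw [← hcons h I hI, ← hcons g I hI]
    exact h1
  · intro hyp
    ext J
    simp only [Iset, Set.mem_setOf_eq]
    rw [consistent_iff, consistent_iff]
    exact forall_congr' fun I => forall_congr' fun hI => forall_congr' fun _ => hyp I hI

/-- **Theorem 2.4.** The `ρ`-equivalence class of `g` equals
`M(A^ρ/X_g) = X_g \ ⋃ {H_I : I a circuit, g ∉ H_I}`; equivalently, `I_h = I_g` iff
`h` and `g` lie on exactly the same hyperplanes `H_I`. -/
theorem equivalence_class_eq_complement_of_restriction
    (hm : 0 < m) (hn : 0 < n) (A : Matrix (Fin m) (Fin n) F) (g : Fin m → F) :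
    {h : Fin m → F | Iset A h = Iset A g} =
        Xflat A g \ ⋃ I ∈ {I : Finset (Fin m) | IsCircuit A I ∧ g ∉ Hcirc A I}, Hcirc A I ∧
      ∀ h : Fin m → F,
        Iset A h = Iset A g ↔
          ∀ I : Finset (Fin m), IsCircuit A I → (h ∈ Hcirc A I ↔ g ∈ Hcirc A I) := by
  refine ⟨?_, fun h => iset_eq_iff A g h⟩
  ext h
  simp only [Set.mem_setOf_eq, Set.mem_diff, Xflat, Set.mem_iInter, Set.mem_iUnion, not_exists]
  rw [iset_eq_iff]
  constructor
  · intro hy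
    refine ⟨fun I hI => (hy I hI.1).mpr hI.2, ?_⟩
    intro I hI hmem
    exact hI.2 ((hy I hI.1).mp hmem)
  · rintro ⟨h1, h2⟩ I hI
    constructor
    · intro hh
      by_contra hg
      exact h2 I ⟨hI, hg⟩ hh
    · intro hg
      exact h1 I ⟨hI, hg⟩
end

section
/- Suppose g, h ∈ F^m satisfy I_g = I_h. Then the map sending, for each J ∈ I_g, the affine subspace ⋂_{j∈J} H_{ρ_j,g_j} (the solution set of [A|J]x = [g|J]) to ⋂_{j∈J} H_{ρ_j,h_j} is a well-defined order isomorphism from L(A_g) to L(A_h) (both ordered by reverse inclusion) which preserves dimension; consequently χ(A_g, t) = χ(A_h, t). -/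
open Matrix

variable {F : Type*} [Field F] {m n : ℕ}

/-- The intersection poset of the arrangement `{H i}` of hyperplanes of the ambient space
`V`: `V` together with all nonempty intersections of subfamilies, i.e. the collection of
nonempty sets of the form `V ∩ ⋂ i ∈ S, H i` (the empty subfamily `S = ∅` yields `V`);
it is ordered by reverse inclusion. -/
def flats {E ι : Type*} (V : Set E) (H : ι → Set E) : Set (Set E) :=
  {W | (∃ S : Set ι, W = V ∩ ⋂ i ∈ S, H i) ∧ W.Nonempty}

lemma flats_finite {E ι : Type*} [Finite ι] (V : Set E) (H : ι → Set E) :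
    (flats V H).Finite := by
  have hsub : flats V H ⊆ (fun S : Set ι => V ∩ ⋂ i ∈ S, H i) '' Set.univ := by
    rintro W ⟨⟨S, rfl⟩, -⟩
    exact ⟨S, Set.mem_univ _, rfl⟩
  exact (Set.finite_univ.image _).subset hsub

lemma self_mem_flats {E ι : Type*} {V : Set E} (H : ι → Set E) (hV : V.Nonempty) :
    V ∈ flats V H :=
  ⟨⟨∅, by simp⟩, hV⟩

/-- The dimension of a subset of an `F`-vector space: the dimension of the direction of its
affine span. -/
noncomputable def adim (F : Type*) [Field F] {E : Type*} [AddCommGroup E] [Module F E]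
    (W : Set E) : ℕ :=
  Module.finrank F (affineSpan F W).direction

open Classical in
/-- The characteristic polynomial `χ(B, t) = ∑_{W ∈ L(B)} μ(V, W) t^(dim W)` of the
arrangement `B = {H i}` of hyperplanes of the ambient space `V`, where `μ` is the Möbius
function of the intersection poset `L(B)` ordered by reverse inclusion (so the Möbius value
`μ(V, W)` of the reverse-inclusion poset is `IncidenceAlgebra.mu` from `W` to `V` in the
inclusion order). -/
noncomputable def chi (F : Type*) [Field F] {E ι : Type*} [AddCommGroup E] [Module F E]
    [Finite ι] (V : Set E) (H : ι → Set E) : Polynomial ℤ :=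
  letI : Fintype ↥(flats V H) := (flats_finite V H).fintype
  letI : LocallyFiniteOrder ↥(flats V H) := Fintype.toLocallyFiniteOrder
  if hV : V.Nonempty then
    ∑ W : ↥(flats V H),
      Polynomial.C (IncidenceAlgebra.mu ℤ W (⟨V, self_mem_flats H hV⟩ : ↥(flats V H))) *
        Polynomial.X ^ adim F (W : Set E)
  else 0

/-- The affine hyperplane `H_{ρ_i, g_i} = {x ∈ F^n : ρ_i · x = g_i}` of the arrangement
`A_g`. -/
def Haff (A : Matrix (Fin m) (Fin n) F) (g : Fin m → F) (i : Fin m) : Set (Fin n → F) :=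
  {x | A i ⬝ᵥ x = g i}
-- ============ auxiliary development ============

def Sol (A : Matrix (Fin m) (Fin n) F) (g : Fin m → F) (J : Finset (Fin m)) :
    Set (Fin n → F) :=
  {x | ∀ j ∈ J, A j ⬝ᵥ x = g j}

lemma iInter_Haff (A : Matrix (Fin m) (Fin n) F) (g : Fin m → F) (J : Finset (Fin m)) :
    (⋂ j ∈ J, Haff A g j) = Sol A g J := by
  ext x; simp [Sol, Haff]

lemma Sol_antitone (A : Matrix (Fin m) (Fin n) F) (g : Fin m → F) {J J' : Finset (Fin m)}
    (hJJ : J ⊆ J') : Sol A g J' ⊆ Sol A g J :=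
  fun _ hx j hj => hx j (hJJ hj)

lemma mem_Iset_iff (A : Matrix (Fin m) (Fin n) F) (g : Fin m → F) (J : Finset (Fin m)) :
    J ∈ Iset A g ↔ (Sol A g J).Nonempty := Iff.rfl

lemma mem_flats_iff (A : Matrix (Fin m) (Fin n) F) (g : Fin m → F) {W : Set (Fin n → F)} :
    W ∈ flats Set.univ (Haff A g) ↔
      ∃ J : Finset (Fin m), W = Sol A g J ∧ W.Nonempty := by
  constructor
  · rintro ⟨⟨S, rfl⟩, hne⟩
    refine ⟨S.toFinite.toFinset, ?_, hne⟩
    ext x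
    simp [Sol, Haff, Set.Finite.mem_toFinset]
  · rintro ⟨J, rfl, hne⟩
    refine ⟨⟨(J : Set (Fin m)), ?_⟩, hne⟩
    ext x
    simp [Sol, Haff]

lemma sol_subset_iff (A : Matrix (Fin m) (Fin n) F) (g : Fin m → F) {J : Finset (Fin m)}
    (hJ : Consistent A J g) (i : Fin m) :
    Sol A g J ⊆ Haff A g i ↔
      (Consistent A (insert i J) g ∧
        ∀ v : Fin n → F, (∀ j ∈ J, A j ⬝ᵥ v = 0) → A i ⬝ᵥ v = 0) := by
  obtain ⟨x0, hx0⟩ := hJ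
  constructor
  · intro hsub
    refine ⟨⟨x0, ?_⟩, ?_⟩
    · intro j hj
      rcases Finset.mem_insert.1 hj with rfl | hj
      · exact hsub hx0
      · exact hx0 j hj
    · intro v hv
      have h1 : x0 + v ∈ Sol A g J := by
        intro j hj
        show A j ⬝ᵥ (x0 + v) = g j
        rw [dotProduct_add, hx0 j hj, hv j hj, add_zero]
      have e1 : A i ⬝ᵥ (x0 + v) = g i := hsub h1
      have e0 : A i ⬝ᵥ x0 = g i := hsub hx0
      rw [dotProduct_add, e0] at e1
      linear_combination e1
  · rintro ⟨⟨x1, hx1⟩, hker⟩ x hx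
    have hv : ∀ j ∈ J, A j ⬝ᵥ (x - x1) = 0 := fun j hj => by
      rw [dotProduct_sub, hx j hj, hx1 j (Finset.mem_insert_of_mem hj), sub_self]
    have h0 := hker _ hv
    rw [dotProduct_sub, hx1 i (Finset.mem_insert_self i J), sub_eq_zero] at h0
    exact h0

lemma sol_transfer {A : Matrix (Fin m) (Fin n) F} {g h : Fin m → F}
    (hgh : Iset A g = Iset A h) {J : Finset (Fin m)} (hJg : J ∈ Iset A g) (i : Fin m) :
    Sol A g J ⊆ Haff A g i ↔ Sol A h J ⊆ Haff A h i := by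
  have hJh : J ∈ Iset A h := hgh ▸ hJg
  have hins : Consistent A (insert i J) g ↔ Consistent A (insert i J) h :=
    Set.ext_iff.1 hgh (insert i J)
  rw [sol_subset_iff A g hJg i, sol_subset_iff A h hJh i, hins]

open Classical in
noncomputable def clos (A : Matrix (Fin m) (Fin n) F) (g : Fin m → F)
    (W : Set (Fin n → F)) : Finset (Fin m) :=
  Finset.univ.filter (fun i => W ⊆ Haff A g i)

lemma mem_clos_iff {A : Matrix (Fin m) (Fin n) F} {g : Fin m → F} {W : Set (Fin n → F)}
    {i : Fin m} : i ∈ clos A g W ↔ W ⊆ Haff A g i := by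
  simp [clos]

lemma sol_clos {A : Matrix (Fin m) (Fin n) F} {g : Fin m → F} {W : Set (Fin n → F)}
    {J : Finset (Fin m)} (hW : W = Sol A g J) : W = Sol A g (clos A g W) := by
  apply Set.Subset.antisymm
  · intro x hx i hi
    exact (mem_clos_iff.1 hi) hx
  · have hsub : J ⊆ clos A g W := fun j hj =>
      mem_clos_iff.2 (fun x hx => by rw [hW] at hx; exact hx j hj)
    intro x hx
    rw [hW]
    exact fun j hj => hx j (hsub hj)

lemma sol_clos_eq {A : Matrix (Fin m) (Fin n) F} {g h : Fin m → F}
    (hgh : Iset A g = Iset A h) {J : Finset (Fin m)} (hJ : J ∈ Iset A g)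
    {W : Set (Fin n → F)} (hW : W = Sol A g J) :
    Sol A h (clos A g W) = Sol A h J := by
  subst hW
  apply Set.Subset.antisymm
  · exact Sol_antitone A h (fun j hj => mem_clos_iff.2 (fun x hx => hx j hj))
  · intro x hx i hi
    exact ((sol_transfer hgh hJ i).1 (mem_clos_iff.1 hi)) hx

lemma clos_mem_Iset {A : Matrix (Fin m) (Fin n) F} {g : Fin m → F} {W : Set (Fin n → F)}
    (hW : W ∈ flats Set.univ (Haff A g)) : clos A g W ∈ Iset A g := by
  obtain ⟨J, hJ, hne⟩ := (mem_flats_iff A g).1 hW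
  obtain ⟨x, hx⟩ := hne
  rw [sol_clos hJ] at hx
  exact ⟨x, hx⟩

lemma phi_mem {A : Matrix (Fin m) (Fin n) F} {g h : Fin m → F}
    (hgh : Iset A g = Iset A h) {W : Set (Fin n → F)}
    (hW : W ∈ flats Set.univ (Haff A g)) :
    Sol A h (clos A g W) ∈ flats Set.univ (Haff A h) := by
  have hch : clos A g W ∈ Iset A h := hgh ▸ clos_mem_Iset hW
  exact (mem_flats_iff A h).2 ⟨clos A g W, rfl, (mem_Iset_iff A h _).1 hch⟩

lemma clos_phi {A : Matrix (Fin m) (Fin n) F} {g h : Fin m → F}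
    (hgh : Iset A g = Iset A h) {W : Set (Fin n → F)}
    (hW : W ∈ flats Set.univ (Haff A g)) :
    clos A h (Sol A h (clos A g W)) = clos A g W := by
  have hJg : clos A g W ∈ Iset A g := clos_mem_Iset hW
  obtain ⟨J, hJ, hne⟩ := (mem_flats_iff A g).1 hW
  have hW' : W = Sol A g (clos A g W) := sol_clos hJ
  ext i
  simp only [mem_clos_iff]
  constructor
  · intro hi
    rw [hW']
    exact (sol_transfer hgh hJg i).2 hi
  · intro hi
    rw [hW'] at hi
    exact (sol_transfer hgh hJg i).1 hi

lemma phi_mono (A : Matrix (Fin m) (Fin n) F) (g h : Fin m → F)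
    {W W' : Set (Fin n → F)} (hsub : W ⊆ W') :
    Sol A h (clos A g W) ⊆ Sol A h (clos A g W') :=
  Sol_antitone A h (fun i hi => mem_clos_iff.2 ((hsub.trans (mem_clos_iff.1 hi))))

def Ker (A : Matrix (Fin m) (Fin n) F) (J : Finset (Fin m)) : Submodule F (Fin n → F) where
  carrier := {v | ∀ j ∈ J, A j ⬝ᵥ v = 0}
  add_mem' := by
    intro a b ha hb j hj
    show A j ⬝ᵥ (a + b) = 0
    rw [dotProduct_add, ha j hj, hb j hj, add_zero]
  zero_mem' := fun j _ => dotProduct_zero _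
  smul_mem' := by
    intro c v hv j hj
    show A j ⬝ᵥ (c • v) = 0
    rw [dotProduct_smul, hv j hj, smul_zero]

lemma vectorSpan_sol {A : Matrix (Fin m) (Fin n) F} {g : Fin m → F} {J : Finset (Fin m)}
    (hne : (Sol A g J).Nonempty) : vectorSpan F (Sol A g J) = Ker A J := by
  obtain ⟨x0, hx0⟩ := hne
  apply le_antisymm
  · rw [vectorSpan_def]
    refine Submodule.span_le.2 ?_
    rintro v hv
    obtain ⟨x, hx, y, hy, rfl⟩ := Set.mem_vsub.1 hv
    intro j hj
    show A j ⬝ᵥ (x - y) = 0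
    rw [dotProduct_sub, hx j hj, hy j hj, sub_self]
  · intro v hv
    rw [vectorSpan_def]
    apply Submodule.subset_span
    refine Set.mem_vsub.2 ⟨x0 + v, ?_, x0, hx0, by simp⟩
    intro j hj
    show A j ⬝ᵥ (x0 + v) = g j
    rw [dotProduct_add, hx0 j hj, hv j hj, add_zero]

lemma adim_sol {A : Matrix (Fin m) (Fin n) F} {g : Fin m → F} {J : Finset (Fin m)}
    (hne : (Sol A g J).Nonempty) :
    adim F (Sol A g J) = Module.finrank F (Ker A J) := by
  rw [adim, direction_affineSpan, vectorSpan_sol hne]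

lemma not_univ_subset_Haff {A : Matrix (Fin m) (Fin n) F} {g : Fin m → F} {i : Fin m}
    (hi : A i ≠ 0) : ¬ (Set.univ : Set (Fin n → F)) ⊆ Haff A g i := by
  intro hsub
  obtain ⟨k, hk⟩ := Function.ne_iff.1 hi
  have h1 : A i ⬝ᵥ Pi.single k ((A i k)⁻¹ * (g i + 1)) = g i :=
    hsub (Set.mem_univ _)
  rw [dotProduct_single, ← mul_assoc, mul_inv_cancel₀ hk, one_mul] at h1
  exact one_ne_zero (by linear_combination h1)

lemma clos_univ {A : Matrix (Fin m) (Fin n) F} {g : Fin m → F}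
    (hrows : ∀ i, A i ≠ 0) : clos A g Set.univ = ∅ := by
  ext i
  simp only [Finset.notMem_empty, iff_false, mem_clos_iff]
  exact not_univ_subset_Haff (hrows i)

lemma Sol_empty (A : Matrix (Fin m) (Fin n) F) (g : Fin m → F) :
    Sol A g ∅ = Set.univ := by
  ext x; simp [Sol]

lemma mu_orderIso_aux {α β : Type*} [PartialOrder α] [PartialOrder β]
    [LocallyFiniteOrder α] [LocallyFiniteOrder β] [DecidableEq α] [DecidableEq β]
    (e : α ≃o β) (a : α) :
    ∀ N : ℕ, ∀ b : α, (Finset.Icc a b).card ≤ N →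
      IncidenceAlgebra.mu ℤ (e a) (e b) = IncidenceAlgebra.mu ℤ a b := by
  intro N
  induction N with
  | zero =>
    intro b hb
    have hab : ¬ a ≤ b := by
      intro hle
      have h1 : a ∈ Finset.Icc a b := Finset.mem_Icc.2 ⟨le_rfl, hle⟩
      have h2 := Finset.card_pos.2 ⟨a, h1⟩
      omega
    rw [IncidenceAlgebra.apply_eq_zero_of_not_le hab,
      IncidenceAlgebra.apply_eq_zero_of_not_le (fun hc => hab (e.le_iff_le.1 hc))]
  | succ N ih =>
    intro b hb
    by_cases hab : a = b
    · subst hab; simp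
    by_cases hle : a ≤ b
    · rw [IncidenceAlgebra.mu_eq_neg_sum_Ico_of_ne hab,
        IncidenceAlgebra.mu_eq_neg_sum_Ico_of_ne (fun hc => hab (e.injective hc))]
      congr 1
      have himg : Finset.Ico (e a) (e b) = (Finset.Ico a b).image e := by
        ext y
        simp only [Finset.mem_Ico, Finset.mem_image]
        constructor
        · rintro ⟨h1, h2⟩
          exact ⟨e.symm y, ⟨by rwa [e.le_symm_apply],
            by rw [← e.lt_iff_lt, e.apply_symm_apply]; exact h2⟩, e.apply_symm_apply y⟩
        · rintro ⟨x, ⟨h1, h2⟩, rfl⟩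
          exact ⟨e.le_iff_le.2 h1, e.lt_iff_lt.2 h2⟩
      rw [himg, Finset.sum_image (fun x _ y _ hxy => e.injective hxy)]
      refine Finset.sum_congr rfl fun x hx => ?_
      have hx' := Finset.mem_Ico.1 hx
      have hsub : Finset.Icc a x ⊂ Finset.Icc a b := by
        constructor
        · intro z hz
          have hz' := Finset.mem_Icc.1 hz
          exact Finset.mem_Icc.2 ⟨hz'.1, hz'.2.trans hx'.2.le⟩
        · intro hcon
          have hb' : b ∈ Finset.Icc a b := Finset.mem_Icc.2 ⟨hle, le_rfl⟩
          exact absurd (Finset.mem_Icc.1 (hcon hb')).2 hx'.2.not_ge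
      have hcard := Finset.card_lt_card hsub
      exact ih x (by omega)
    · rw [IncidenceAlgebra.apply_eq_zero_of_not_le hle,
        IncidenceAlgebra.apply_eq_zero_of_not_le (fun hc => hle (e.le_iff_le.1 hc))]

lemma mu_orderIso {α β : Type*} [PartialOrder α] [PartialOrder β]
    [LocallyFiniteOrder α] [LocallyFiniteOrder β] [DecidableEq α] [DecidableEq β]
    (e : α ≃o β) (a b : α) :
    IncidenceAlgebra.mu ℤ (e a) (e b) = IncidenceAlgebra.mu ℤ a b :=
  mu_orderIso_aux e a (Finset.Icc a b).card b le_rfl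

lemma chi_eq_of_equiv {E ι : Type*} [AddCommGroup E] [Module F E] [Finite ι]
    (H₁ H₂ : ι → Set E) (hV : (Set.univ : Set E).Nonempty)
    (e : ↥(flats Set.univ H₁) ≃ ↥(flats Set.univ H₂))
    (hord : ∀ W W' : ↥(flats Set.univ H₁),
      (W : Set E) ⊆ (W' : Set E) ↔ ((e W : Set E) ⊆ (e W' : Set E)))
    (htop : e ⟨Set.univ, self_mem_flats H₁ hV⟩ = ⟨Set.univ, self_mem_flats H₂ hV⟩)
    (hdim : ∀ W, adim F (e W : Set E) = adim F (W : Set E)) :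
    chi F Set.univ H₁ = chi F Set.univ H₂ := by
  classical
  unfold chi
  rw [dif_pos hV, dif_pos hV]
  letI : Fintype ↥(flats Set.univ H₁) := (flats_finite _ _).fintype
  letI : Fintype ↥(flats Set.univ H₂) := (flats_finite _ _).fintype
  letI : LocallyFiniteOrder ↥(flats Set.univ H₁) := Fintype.toLocallyFiniteOrder
  letI : LocallyFiniteOrder ↥(flats Set.univ H₂) := Fintype.toLocallyFiniteOrder
  let eo : ↥(flats Set.univ H₁) ≃o ↥(flats Set.univ H₂) :=
    { e with map_rel_iff' := fun {a b} => (hord a b).symm }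
  refine Fintype.sum_equiv e _ _ fun W => ?_
  rw [hdim]
  congr 2
  rw [← htop]
  exact (mu_orderIso eo W _).symm

/-- If `I_g = I_h`, then sending the affine subspace
`⋂_{j ∈ J} H_{ρ_j,g_j}` (for `J ∈ I_g`) to `⋂_{j ∈ J} H_{ρ_j,h_j}` is a well-defined
order isomorphism `L(A_g) ≅ L(A_h)` (both ordered by reverse inclusion) preserving
dimension; consequently `χ(A_g, t) = χ(A_h, t)`. -/
theorem semilattice_iso_of_Iset_eq
    (hm : 0 < m) (hn : 0 < n) (A : Matrix (Fin m) (Fin n) F) (hrows : ∀ i, A i ≠ 0)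
    (g h : Fin m → F) (hgh : Iset A g = Iset A h) :
    (∃ e : ↥(flats Set.univ (Haff A g)) ≃ ↥(flats Set.univ (Haff A h)),
        (∀ J ∈ Iset A g,
          ∀ (W : ↥(flats Set.univ (Haff A g))) (W' : ↥(flats Set.univ (Haff A h))),
            (W : Set (Fin n → F)) = ⋂ j ∈ J, Haff A g j →
            (W' : Set (Fin n → F)) = ⋂ j ∈ J, Haff A h j → e W = W') ∧
        (∀ W W' : ↥(flats Set.univ (Haff A g)),
          (W : Set (Fin n → F)) ⊆ (W' : Set (Fin n → F)) ↔
            ((e W : Set (Fin n → F)) ⊆ (e W' : Set (Fin n → F)))) ∧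
        ∀ W : ↥(flats Set.univ (Haff A g)),
          adim F (e W : Set (Fin n → F)) = adim F (W : Set (Fin n → F))) ∧
      chi F Set.univ (Haff A g) = chi F Set.univ (Haff A h) := by
  have hVne : (Set.univ : Set (Fin n → F)).Nonempty := Set.univ_nonempty
  let e : ↥(flats Set.univ (Haff A g)) ≃ ↥(flats Set.univ (Haff A h)) :=
    { toFun := fun W => ⟨Sol A h (clos A g ↑W), phi_mem hgh W.2⟩
      invFun := fun W => ⟨Sol A g (clos A h ↑W), phi_mem hgh.symm W.2⟩
      left_inv := fun W => Subtype.ext (by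
        show Sol A g (clos A h (Sol A h (clos A g ↑W))) = ↑W
        rw [clos_phi hgh W.2]
        obtain ⟨J, hJ, -⟩ := (mem_flats_iff A g).1 W.2
        exact (sol_clos hJ).symm)
      right_inv := fun W => Subtype.ext (by
        show Sol A h (clos A g (Sol A g (clos A h ↑W))) = ↑W
        rw [clos_phi hgh.symm W.2]
        obtain ⟨J, hJ, -⟩ := (mem_flats_iff A h).1 W.2
        exact (sol_clos hJ).symm) }
  have he : ∀ W : ↥(flats Set.univ (Haff A g)),
      (e W : Set (Fin n → F)) = Sol A h (clos A g ↑W) := fun _ => rfl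
  have hesymm : ∀ W' : ↥(flats Set.univ (Haff A h)),
      (e.symm W' : Set (Fin n → F)) = Sol A g (clos A h ↑W') := fun _ => rfl
  have hord : ∀ W W' : ↥(flats Set.univ (Haff A g)),
      (W : Set (Fin n → F)) ⊆ (W' : Set (Fin n → F)) ↔
        ((e W : Set (Fin n → F)) ⊆ (e W' : Set (Fin n → F))) := by
    intro W W'
    constructor
    · intro hsub
      rw [he W, he W']
      exact phi_mono A g h hsub
    · intro hsub
      have h2 : (e.symm (e W) : Set (Fin n → F)) ⊆ (e.symm (e W') : Set (Fin n → F)) := by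
        rw [hesymm, hesymm]
        exact phi_mono A h g hsub
      rwa [e.symm_apply_apply, e.symm_apply_apply] at h2
  have hdim : ∀ W : ↥(flats Set.univ (Haff A g)),
      adim F (e W : Set (Fin n → F)) = adim F (W : Set (Fin n → F)) := by
    intro W
    obtain ⟨J, hJ, -⟩ := (mem_flats_iff A g).1 W.2
    have h1 : (W : Set (Fin n → F)) = Sol A g (clos A g ↑W) := sol_clos hJ
    have hne1 : (Sol A g (clos A g (W : Set (Fin n → F)))).Nonempty := by
      rw [← h1]; exact W.2.2
    have hne2 : (Sol A h (clos A g (W : Set (Fin n → F)))).Nonempty := by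
      rw [← he W]; exact (e W).2.2
    rw [he W, adim_sol hne2]
    conv_rhs => rw [h1]
    rw [adim_sol hne1]
  have htop : e ⟨Set.univ, self_mem_flats (Haff A g) hVne⟩ =
      ⟨Set.univ, self_mem_flats (Haff A h) hVne⟩ := by
    apply Subtype.ext
    rw [he, clos_univ hrows, Sol_empty]
  refine ⟨⟨e, ?_, hord, hdim⟩, chi_eq_of_equiv (Haff A g) (Haff A h) hVne e hord htop hdim⟩
  intro J hJ W W' hWeq hW'eq
  apply Subtype.ext
  rw [he W, hW'eq, iInter_Haff]
  exact sol_clos_eq hgh hJ (hWeq.trans (iInter_Haff A g J))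
end
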